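/- arXiv:2605.10671 — 2 statements merged into one kernel-verified Lean document; each statement's English description precedes it below -/
import Mathlib

section
/- Natural policy gradient with geometrically increasing stepsizes converges geometrically: assume |A| = m ≥ 2, let β ∈ (0,1), and let (π_k, θ_k) be an NPG sequence with stepsizes α_0 = log(m) and α_k = β·α_0/(1−β)^k for all k ≥ 1. Then for every k ≥ 1, ‖V* − V^{π_k}‖∞ ≤ (1 − (1−γ)β)^{k−1} · (γ‖V* − V^{π_0}‖∞ + 1). -/
open Finset

noncomputable section

/-- A finite discounted MDP: transition kernel `p`, reward `R` in `[0,1]`,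
discount factor `γ ∈ (0,1)`. -/
structure MDP (S A : Type*) [Fintype S] [Fintype A] where
  p : S → A → S → ℝ
  R : S → A → ℝ
  γ : ℝ
  hp : ∀ s a, p s a ∈ stdSimplex ℝ S
  hR : ∀ s a, R s a ∈ Set.Icc (0 : ℝ) 1
  hγ : γ ∈ Set.Ioo (0 : ℝ) 1

variable {S A : Type*} [Fintype S] [Fintype A] [Nonempty S] [Nonempty A]

/-- The Bellman operator `H^π` of a policy `pol`. -/
def bellmanPol (M : MDP S A) (pol : S → A → ℝ) (Q : S → A → ℝ) : S → A → ℝ :=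
  fun s a => M.R s a + M.γ * ∑ s', M.p s a s' * ∑ a', pol s' a' * Q s' a'

/-- The Bellman optimality operator `H`. -/
def bellmanOpt (M : MDP S A) (Q : S → A → ℝ) : S → A → ℝ :=
  fun s a => M.R s a + M.γ * ∑ s', M.p s a s' * (⨆ a', Q s' a')

/-- The sup-norm of a vector in `ℝ^{S×A}`. -/
def supNormQ (Q : S → A → ℝ) : ℝ := ⨆ x : S × A, |Q x.1 x.2|

/-- The sup-norm of a vector in `ℝ^S`. -/
def supNormV (V : S → ℝ) : ℝ := ⨆ s : S, |V s|

/-- The value function `V^π` of a policy `pol` with `Q`-function `Qpol`. -/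
def valueOf (pol : S → A → ℝ) (Qpol : S → A → ℝ) : S → ℝ := fun s => ∑ a, pol s a * Qpol s a

/-- The optimal value function `V*` derived from `Q*`. -/
def Vstar (Qstar : S → A → ℝ) : S → ℝ := fun s => ⨆ a, Qstar s a

/-- The Shannon entropy on the probability simplex. -/
def entropyFn (μ : A → ℝ) : ℝ := -∑ a, μ a * Real.log (μ a)

/-- An NPG sequence: `pol 0` is uniform, `θ 0 = 0`, `θ (k+1) = θ k + α k • Q^{π_k}`,
and `pol (k+1) s` maximizes `μ ↦ μ · θ (k+1) s + h(μ)` over the simplex. -/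
structure NPGSeq (M : MDP S A) (α : ℕ → ℝ) where
  pol : ℕ → S → A → ℝ
  Qpi : ℕ → S → A → ℝ
  θ : ℕ → S → A → ℝ
  hpol : ∀ k s, pol k s ∈ stdSimplex ℝ A
  hQpi : ∀ k, bellmanPol M (pol k) (Qpi k) = Qpi k
  hpol0 : ∀ s a, pol 0 s a = (Fintype.card A : ℝ)⁻¹
  hθ0 : θ 0 = 0
  hθSucc : ∀ k, θ (k + 1) = θ k + α k • Qpi k
  hmax : ∀ k s, ∀ μ ∈ stdSimplex ℝ A,
      ∑ a, μ a * θ (k + 1) s a + entropyFn μ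
        ≤ ∑ a, pol (k + 1) s a * θ (k + 1) s a + entropyFn (pol (k + 1) s)

/-!
The scores `θ_{k+1} = ∑_{j ≤ k} α_j Q^{π_j}` make `π_{k+1}` an entropy-regularised maximiser,
so comparing it with the point mass on an optimal action `a₀` costs at most `log m`:
`θ_{k+1}(s, a₀) ≤ π_{k+1} · θ_{k+1}(s) + log m`. The left side is at least
`∑ α_j (V*(s) - γ δ_j)` with `δ_j = ‖V* - V^{π_j}‖∞`, since `Q* - Q^{π_j} ≤ γ δ_j`; the right
side is at most `(∑ α_j) V^{π_{k+1}}(s) + log m`, since the `Q^{π_j}` increase with `j`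
(policy improvement). Hence `(∑_{j ≤ k} α_j) δ_{k+1} ≤ log m + γ ∑_{j ≤ k} α_j δ_j`, and for
the geometric stepsizes, whose partial sums are `α_0 / (1 - β)^k`, this recursion unrolls to
`δ_{k+1} ≤ (1 - (1 - γ) β)^k (γ δ_0 + 1)`.
-/

open Real

lemma sum_mul_le_of_mem_stdSimplex {ι : Type*} [Fintype ι] {w f : ι → ℝ}
    (hw : w ∈ stdSimplex ℝ ι) {c : ℝ} (hf : ∀ i, f i ≤ c) : ∑ i, w i * f i ≤ c :=
  calc ∑ i, w i * f i ≤ ∑ i, w i * c :=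
        sum_le_sum fun i _ => mul_le_mul_of_nonneg_left (hf i) (hw.1 i)
    _ = c := by rw [← sum_mul, hw.2, one_mul]

lemma le_supNormV {ι : Type*} [Fintype ι] (V : ι → ℝ) (i : ι) : |V i| ≤ supNormV V :=
  le_ciSup (f := fun i => |V i|) (Finite.bddAbove_range _) i

section Entropy

omit [Nonempty A] in
lemma entropyFn_eq_sum_negMulLog (μ : A → ℝ) : entropyFn μ = ∑ a, negMulLog (μ a) := by
  simp [entropyFn, negMulLog_eq_neg]

omit [Nonempty A] in
lemma entropyFn_single [DecidableEq A] (a : A) : entropyFn (Pi.single a (1 : ℝ)) = 0 := by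
  rw [entropyFn_eq_sum_negMulLog]
  refine sum_eq_zero fun b _ => ?_
  rcases eq_or_ne b a with rfl | h <;> simp [*]

lemma entropyFn_uniform :
    entropyFn (fun _ : A => (Fintype.card A : ℝ)⁻¹) = log (Fintype.card A) := by
  have hm : (Fintype.card A : ℝ) ≠ 0 := by exact_mod_cast Fintype.card_ne_zero
  simp [entropyFn, log_inv]

lemma entropyFn_le_log_card {μ : A → ℝ} (hμ : μ ∈ stdSimplex ℝ A) :
    entropyFn μ ≤ log (Fintype.card A) := by
  have hm : (0 : ℝ) < Fintype.card A := by exact_mod_cast Fintype.card_pos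
  have jensen := concaveOn_negMulLog.le_map_sum (t := univ)
    (w := fun _ => (Fintype.card A : ℝ)⁻¹) (p := μ) (fun _ _ => by positivity)
    (by simp [hm.ne']) (fun a _ => hμ.1 a)
  simp only [smul_eq_mul, ← mul_sum, hμ.2, mul_one, negMulLog, log_inv] at jensen
  field_simp at jensen
  rwa [entropyFn, ← sum_neg_distrib]

end Entropy

section EntropicMaximizer

def IsEntropicMaximizer (θ μ₀ : A → ℝ) : Prop :=
  μ₀ ∈ stdSimplex ℝ A ∧
    ∀ μ ∈ stdSimplex ℝ A, ∑ a, μ a * θ a + entropyFn μ ≤ ∑ a, μ₀ a * θ a + entropyFn μ₀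

lemma isEntropicMaximizer_zero_uniform :
    IsEntropicMaximizer (0 : A → ℝ) (fun _ => (Fintype.card A : ℝ)⁻¹) := by
  have hm : (0 : ℝ) < Fintype.card A := by exact_mod_cast Fintype.card_pos
  refine ⟨⟨fun _ => by positivity, by simp [hm.ne']⟩, fun μ hμ => ?_⟩
  simpa [entropyFn_uniform] using entropyFn_le_log_card hμ

namespace IsEntropicMaximizer

variable {θ μ₀ : A → ℝ}

lemma le_sum_mul_add_log (h : IsEntropicMaximizer θ μ₀) (a : A) :
    θ a ≤ ∑ b, μ₀ b * θ b + log (Fintype.card A) := by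
  classical
  have := h.2 _ (single_mem_stdSimplex ℝ a)
  simp only [Pi.single_apply, ite_mul, one_mul, zero_mul, sum_ite_eq', mem_univ, if_true,
    entropyFn_single, add_zero] at this
  linarith [entropyFn_le_log_card h.1]

omit [Nonempty A] in
lemma sum_mul_le_of_add_smul {q μ₁ : A → ℝ} {c : ℝ} (h₀ : IsEntropicMaximizer θ μ₀)
    (h₁ : IsEntropicMaximizer (θ + c • q) μ₁) (hc : 0 < c) :
    ∑ a, μ₀ a * q a ≤ ∑ a, μ₁ a * q a := by
  have h₀₁ := h₀.2 μ₁ h₁.1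
  have h₁₀ := h₁.2 μ₀ h₀.1
  simp only [Pi.add_apply, Pi.smul_apply, smul_eq_mul, mul_add, sum_add_distrib,
    mul_left_comm _ c, ← mul_sum] at h₁₀
  nlinarith

end IsEntropicMaximizer

end EntropicMaximizer

section Bellman

variable (M : MDP S A) {pol pol' Q Q' Qstar : S → A → ℝ}

omit [Nonempty S] [Nonempty A] in
lemma bellmanPol_sub_bellmanPol (pol Q Q' : S → A → ℝ) (s : S) (a : A) :
    bellmanPol M pol Q s a - bellmanPol M pol Q' s a
      = M.γ * ∑ s', M.p s a s' * ∑ a', pol s' a' * (Q s' a' - Q' s' a') := by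
  simp only [bellmanPol, mul_sub, sum_sub_distrib]
  ring

/-- The maximum `t` of `Q - Q'` satisfies `t ≤ γ t`, and `γ < 1`. -/
lemma le_of_le_bellmanPol_of_bellmanPol_le (hpol : ∀ s, pol s ∈ stdSimplex ℝ A)
    (h : Q ≤ bellmanPol M pol Q) (h' : bellmanPol M pol Q' ≤ Q') : Q ≤ Q' := by
  obtain ⟨⟨s₀, a₀⟩, -, hmax⟩ := exists_max_image univ (fun x : S × A => Q x.1 x.2 - Q' x.1 x.2)
    univ_nonempty
  have hle_max : ∀ s a, Q s a - Q' s a ≤ Q s₀ a₀ - Q' s₀ a₀ := fun s a => hmax (s, a) (mem_univ _)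
  have hstep : ∀ s a, Q s a - Q' s a ≤ M.γ * (Q s₀ a₀ - Q' s₀ a₀) := fun s a =>
    calc Q s a - Q' s a ≤ bellmanPol M pol Q s a - bellmanPol M pol Q' s a :=
          sub_le_sub (h s a) (h' s a)
      _ = M.γ * ∑ s', M.p s a s' * ∑ a', pol s' a' * (Q s' a' - Q' s' a') :=
          bellmanPol_sub_bellmanPol M pol Q Q' s a
      _ ≤ M.γ * (Q s₀ a₀ - Q' s₀ a₀) :=
          mul_le_mul_of_nonneg_left (sum_mul_le_of_mem_stdSimplex (M.hp s a) fun s' =>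
            sum_mul_le_of_mem_stdSimplex (hpol s') fun a' => hle_max s' a') M.hγ.1.le
  have hnonpos : Q s₀ a₀ - Q' s₀ a₀ ≤ 0 := by nlinarith [hstep s₀ a₀, M.hγ.2]
  exact fun s a => sub_nonpos.mp ((hle_max s a).trans hnonpos)

omit [Nonempty S] [Nonempty A] in
lemma bellmanPol_le_bellmanPol (h : ∀ s, ∑ a, pol s a * Q s a ≤ ∑ a, pol' s a * Q s a) :
    bellmanPol M pol Q ≤ bellmanPol M pol' Q := fun s a => by
  unfold bellmanPol
  gcongr M.R s a + M.γ * ∑ s', M.p s a s' * ?_ with s'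
  · exact M.hγ.1.le
  · exact (M.hp s a).1 s'
  · exact h s'

omit [Nonempty S] [Nonempty A] in
lemma bellmanPol_le_bellmanOpt (hpol : ∀ s, pol s ∈ stdSimplex ℝ A) (Q : S → A → ℝ) :
    bellmanPol M pol Q ≤ bellmanOpt M Q := fun s a => by
  unfold bellmanPol bellmanOpt
  gcongr with s'
  · exact M.hγ.1.le
  · exact (M.hp s a).1 s'
  · exact sum_mul_le_of_mem_stdSimplex (hpol s') fun a' => le_ciSup (Finite.bddAbove_range _) a'

lemma le_of_bellmanPol_eq_of_bellmanOpt_eq (hpol : ∀ s, pol s ∈ stdSimplex ℝ A)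
    (hQ : bellmanPol M pol Q = Q) (hQstar : bellmanOpt M Qstar = Qstar) : Q ≤ Qstar :=
  le_of_le_bellmanPol_of_bellmanPol_le M hpol hQ.ge
    ((bellmanPol_le_bellmanOpt M hpol Qstar).trans hQstar.le)

lemma valueOf_le_Vstar (hpol : ∀ s, pol s ∈ stdSimplex ℝ A) (hQ : bellmanPol M pol Q = Q)
    (hQstar : bellmanOpt M Qstar = Qstar) (s : S) : valueOf pol Q s ≤ Vstar Qstar s :=
  sum_mul_le_of_mem_stdSimplex (hpol s) fun a =>
    (le_of_bellmanPol_eq_of_bellmanOpt_eq M hpol hQ hQstar s a).trans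
      (le_ciSup (Finite.bddAbove_range _) a)

lemma le_of_valueOf_le_sum_mul (hpol' : ∀ s, pol' s ∈ stdSimplex ℝ A)
    (hQ : bellmanPol M pol Q = Q) (hQ' : bellmanPol M pol' Q' = Q')
    (h : ∀ s, valueOf pol Q s ≤ ∑ a, pol' s a * Q s a) : Q ≤ Q' :=
  le_of_le_bellmanPol_of_bellmanPol_le M hpol'
    (hQ.symm.le.trans (bellmanPol_le_bellmanPol M h)) hQ'.le

omit [Nonempty S] [Nonempty A] in
lemma sub_le_mul_supNormV (hQ : bellmanPol M pol Q = Q) (hQstar : bellmanOpt M Qstar = Qstar)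
    (s : S) (a : A) :
    Qstar s a - Q s a ≤ M.γ * supNormV (Vstar Qstar - valueOf pol Q) := by
  have hdiff : bellmanOpt M Qstar s a - bellmanPol M pol Q s a
      = M.γ * ∑ s', M.p s a s' * (Vstar Qstar s' - valueOf pol Q s') := by
    simp only [bellmanOpt, bellmanPol, Vstar, valueOf, mul_sub, sum_sub_distrib]
    ring
  rw [hQstar, hQ] at hdiff
  rw [hdiff]
  exact mul_le_mul_of_nonneg_left (sum_mul_le_of_mem_stdSimplex (M.hp s a) fun s' =>
    (le_abs_self _).trans (le_supNormV (Vstar Qstar - valueOf pol Q) s')) M.hγ.1.le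

end Bellman

namespace NPGSeq

variable {M : MDP S A} {α : ℕ → ℝ} (N : NPGSeq M α)

omit [Nonempty S] [Nonempty A] in
lemma θ_apply_eq_sum (k : ℕ) (s : S) (a : A) :
    N.θ k s a = ∑ j ∈ range k, α j * N.Qpi j s a := by
  induction k with
  | zero => simp [N.hθ0]
  | succ k ih => simp [N.hθSucc, sum_range_succ, ih]

omit [Nonempty S] in
lemma isEntropicMaximizer (k : ℕ) (s : S) : IsEntropicMaximizer (N.θ k s) (N.pol k s) := by
  cases k with
  | zero =>
    rw [N.hθ0, show N.pol 0 s = _ from funext (N.hpol0 s)]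
    exact isEntropicMaximizer_zero_uniform
  | succ k => exact ⟨N.hpol (k + 1) s, N.hmax k s⟩

omit [Nonempty S] in
lemma valueOf_le_sum_pol_succ_mul (k : ℕ) (hα : 0 < α k) (s : S) :
    valueOf (N.pol k) (N.Qpi k) s ≤ ∑ a, N.pol (k + 1) s a * N.Qpi k s a := by
  have hθ : N.θ (k + 1) s = N.θ k s + α k • N.Qpi k s := by simp [N.hθSucc]
  exact (N.isEntropicMaximizer k s).sum_mul_le_of_add_smul
    (hθ ▸ N.isEntropicMaximizer (k + 1) s) hα

lemma monotone_Qpi (hα : ∀ k, 0 < α k) : Monotone N.Qpi :=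
  monotone_nat_of_le_succ fun k => le_of_valueOf_le_sum_mul M (N.hpol (k + 1))
    (N.hQpi k) (N.hQpi (k + 1)) (N.valueOf_le_sum_pol_succ_mul k (hα k))

variable {Qstar : S → A → ℝ}

lemma sum_mul_sub_valueOf_le (hα : ∀ k, 0 < α k) (hQstar : bellmanOpt M Qstar = Qstar)
    (k : ℕ) (s : S) :
    (∑ j ∈ range (k + 1), α j) * (Vstar Qstar s - valueOf (N.pol (k + 1)) (N.Qpi (k + 1)) s)
      ≤ log (Fintype.card A) + M.γ * ∑ j ∈ range (k + 1),
          α j * supNormV (Vstar Qstar - valueOf (N.pol j) (N.Qpi j)) := by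
  obtain ⟨a₀, -, ha₀⟩ := exists_max_image univ (Qstar s) univ_nonempty
  have hV : Vstar Qstar s = Qstar s a₀ :=
    le_antisymm (ciSup_le fun a => ha₀ a (mem_univ a)) (le_ciSup (Finite.bddAbove_range _) a₀)
  have hθ_lower : (∑ j ∈ range (k + 1), α j) * Vstar Qstar s
      - M.γ * ∑ j ∈ range (k + 1), α j * supNormV (Vstar Qstar - valueOf (N.pol j) (N.Qpi j))
      ≤ N.θ (k + 1) s a₀ := by
    rw [N.θ_apply_eq_sum, hV, sum_mul, mul_sum, ← sum_sub_distrib]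
    exact sum_le_sum fun j _ => by nlinarith [sub_le_mul_supNormV M (N.hQpi j) hQstar s a₀, hα j]
  have hθ_upper : ∑ a, N.pol (k + 1) s a * N.θ (k + 1) s a
      ≤ (∑ j ∈ range (k + 1), α j) * valueOf (N.pol (k + 1)) (N.Qpi (k + 1)) s := by
    rw [valueOf, mul_sum]
    refine sum_le_sum fun a _ => ?_
    rw [mul_left_comm]
    refine mul_le_mul_of_nonneg_left ?_ ((N.hpol (k + 1) s).1 a)
    rw [N.θ_apply_eq_sum, sum_mul]
    exact sum_le_sum fun j hj => mul_le_mul_of_nonneg_left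
      (N.monotone_Qpi hα (by simp at hj; omega) s a) (hα j).le
  linarith [(N.isEntropicMaximizer (k + 1) s).le_sum_mul_add_log a₀]

lemma sum_mul_supNormV_le (hα : ∀ k, 0 < α k) (hQstar : bellmanOpt M Qstar = Qstar) (k : ℕ) :
    (∑ j ∈ range (k + 1), α j) * supNormV (Vstar Qstar - valueOf (N.pol (k + 1)) (N.Qpi (k + 1)))
      ≤ log (Fintype.card A) + M.γ * ∑ j ∈ range (k + 1),
          α j * supNormV (Vstar Qstar - valueOf (N.pol j) (N.Qpi j)) := by
  rw [supNormV, Real.mul_iSup_of_nonneg (sum_nonneg fun j _ => (hα j).le)]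
  refine ciSup_le fun s => ?_
  rw [Pi.sub_apply,
    abs_of_nonneg (sub_nonneg.2 (valueOf_le_Vstar M (N.hpol _) (N.hQpi _) hQstar s))]
  exact N.sum_mul_sub_valueOf_le hα hQstar k s

end NPGSeq

section Recursion

variable {γ b : ℝ} {α : ℕ → ℝ}

lemma sum_range_succ_eq_div_pow (hb : b ≠ 1) (hα : ∀ k ≥ 1, α k = b * α 0 / (1 - b) ^ k)
    (k : ℕ) : ∑ j ∈ range (k + 1), α j = α 0 / (1 - b) ^ k := by
  have h1b : 1 - b ≠ 0 := sub_ne_zero.2 hb.symm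
  induction k with
  | zero => simp
  | succ k ih =>
    rw [sum_range_succ, ih, hα (k + 1) (by omega)]
    field_simp
    ring

/-- The summand is `α 0 * (r ^ (i + 1) - r ^ i)` with `r = (1 - (1 - γ) * b) / (1 - b)`. -/
lemma mul_sum_range_mul_pow_eq (hb : b ≠ 1) (hα : ∀ k ≥ 1, α k = b * α 0 / (1 - b) ^ k)
    (k : ℕ) :
    γ * ∑ i ∈ range k, α (i + 1) * (1 - (1 - γ) * b) ^ i
      = α 0 * (((1 - (1 - γ) * b) / (1 - b)) ^ k - 1) := by
  have h1b : 1 - b ≠ 0 := sub_ne_zero.2 hb.symm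
  have hstep : ∀ i, γ * (α (i + 1) * (1 - (1 - γ) * b) ^ i)
      = α 0 * ((1 - (1 - γ) * b) / (1 - b)) ^ (i + 1)
        - α 0 * ((1 - (1 - γ) * b) / (1 - b)) ^ i := by
    intro i
    rw [hα (i + 1) (by omega), div_pow, div_pow]
    field_simp
    ring
  rw [mul_sum, sum_congr rfl fun i _ => hstep i,
    sum_range_sub fun i => α 0 * ((1 - (1 - γ) * b) / (1 - b)) ^ i]
  ring

lemma le_geometric_of_le_weighted_sum {δ : ℕ → ℝ} (hγ : 0 ≤ γ) (hb : b ∈ Set.Ico 0 1)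
    (hα₀ : 0 < α 0) (hα : ∀ k ≥ 1, α k = b * α 0 / (1 - b) ^ k)
    (hδ : ∀ k, (∑ j ∈ range (k + 1), α j) * δ (k + 1)
      ≤ α 0 + γ * ∑ j ∈ range (k + 1), α j * δ j) :
    ∀ k ≥ 1, δ k ≤ (1 - (1 - γ) * b) ^ (k - 1) * (γ * δ 0 + 1) := by
  set ρ := 1 - (1 - γ) * b
  set c := γ * δ 0 + 1
  have h1b : 0 < 1 - b := sub_pos.2 hb.2
  suffices h : ∀ k, δ (k + 1) ≤ ρ ^ k * c by
    intro k hk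
    simpa [Nat.sub_add_cancel hk] using h (k - 1)
  intro k
  induction k using Nat.strong_induction_on with
  | _ k ih =>
    have hsum : ∑ j ∈ range (k + 1), α j * δ j
        ≤ α 0 * δ 0 + c * ∑ i ∈ range k, α (i + 1) * ρ ^ i := by
      rw [sum_range_succ', add_comm, mul_sum]
      gcongr α 0 * δ 0 + ∑ i ∈ range k, ?_ with i hi
      have hαi : 0 ≤ α (i + 1) := by rw [hα (i + 1) (by omega)]; have := hb.1; positivity
      calc α (i + 1) * δ (i + 1) ≤ α (i + 1) * (ρ ^ i * c) :=
            mul_le_mul_of_nonneg_left (ih i (mem_range.1 hi)) hαi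
        _ = c * (α (i + 1) * ρ ^ i) := by ring
    have hA : 0 < α 0 / (1 - b) ^ k := by positivity
    refine le_of_mul_le_mul_left ?_ hA
    rw [← sum_range_succ_eq_div_pow hb.2.ne hα]
    calc (∑ j ∈ range (k + 1), α j) * δ (k + 1)
        ≤ α 0 + γ * ∑ j ∈ range (k + 1), α j * δ j := hδ k
      _ ≤ α 0 + γ * (α 0 * δ 0 + c * ∑ i ∈ range k, α (i + 1) * ρ ^ i) := by gcongr
      _ = α 0 * c * (ρ / (1 - b)) ^ k := by
        rw [mul_add, mul_left_comm γ c, mul_sum_range_mul_pow_eq hb.2.ne hα]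
        ring
      _ = (∑ j ∈ range (k + 1), α j) * (ρ ^ k * c) := by
        rw [sum_range_succ_eq_div_pow hb.2.ne hα, div_pow]
        field_simp

end Recursion

theorem npg_geometric_general
    (M : MDP S A)
    (b : ℝ) (hb : b ∈ Set.Ioo (0 : ℝ) 1)
    (α : ℕ → ℝ) (hα : ∀ k, 0 < α k)
    (hα0 : α 0 = Real.log (Fintype.card A))
    (hαk : ∀ k ≥ 1, α k = b * α 0 / (1 - b) ^ k)
    (N : NPGSeq M α)
    (Qstar : S → A → ℝ) (hQstar : bellmanOpt M Qstar = Qstar) :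
    ∀ k ≥ 1,
      supNormV (Vstar Qstar - valueOf (N.pol k) (N.Qpi k))
        ≤ (1 - (1 - M.γ) * b) ^ (k - 1)
          * (M.γ * supNormV (Vstar Qstar - valueOf (N.pol 0) (N.Qpi 0)) + 1) :=
  le_geometric_of_le_weighted_sum M.hγ.1.le (Set.Ioo_subset_Ico_self hb) (hα 0) hαk
    fun k => hα0 ▸ N.sum_mul_supNormV_le hα hQstar k

/-- **NPG with geometrically increasing stepsizes converges geometrically** (Theorem 2). -/
theorem npg_geometric
    (M : MDP S A) (hA : 2 ≤ Fintype.card A)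
    (b : ℝ) (hb : b ∈ Set.Ioo (0 : ℝ) 1)
    (α : ℕ → ℝ) (hα : ∀ k, 0 < α k)
    (hα0 : α 0 = Real.log (Fintype.card A))
    (hαk : ∀ k ≥ 1, α k = b * α 0 / (1 - b) ^ k)
    (N : NPGSeq M α)
    (Qstar : S → A → ℝ) (hQstar : bellmanOpt M Qstar = Qstar) :
    ∀ k ≥ 1,
      supNormV (Vstar Qstar - valueOf (N.pol k) (N.Qpi k))
        ≤ (1 - (1 - M.γ) * b) ^ (k - 1)
          * (M.γ * supNormV (Vstar Qstar - valueOf (N.pol 0) (N.Qpi 0)) + 1) :=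
  npg_geometric_general M b hb α hα hα0 hαk N Qstar hQstar
end
end

section
/- Bound on the averaged iterates in approximate DSPI: let ε ≥ 0 and let (π_k, W_k*, W̄_k) be an approximate DSPI sequence with stepsizes β_0 = 1 and β_k = β ∈ (0,1] for all k ≥ 1. Then for every k ≥ 1, W̄_k ≤ Q^{π_k} + δ_k · 1 componentwise, where δ_k = ((1+γ)/(1−γ)) · ε · Σ_{i=0}^{k−1} (1−β)^i and 1 denotes the all-ones vector in ℝ^{S×A}. -/
/-! The error `δ_k` obeys `δ_{k+1} = (1-β) δ_k + ε + 2γε/(1-γ)`: averaging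
`W̄_{k+1} = (1-β) W̄_k + β W_k` with `W_k ≤ Q^{π_k} + ε` costs `ε`, and passing from `Q^{π_k}`
to `Q^{π_{k+1}}` costs `2γε/(1-γ)` by approximate policy improvement. The improvement holds
because `π_{k+1}` is greedy for `W_k` in expectation: the smoothed greedy conditions at steps `k`
and `k-1` are affine in `(W̄, η)`, and `(W̄_{k+1}, η_k) = (1-β)(W̄_k, η_{k-1}) + β(W_k, 0)`, so
subtracting them cancels the regularization terms. -/

open Finset

noncomputable section

variable {S A : Type*} [Fintype S] [Fintype A] [Nonempty S] [Nonempty A]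

/-- The smoothed Bellman optimality operator `H_η`. -/
def smoothedOpt (M : MDP S A) (ν : (A → ℝ) → ℝ) (η : ℝ) (Q : S → A → ℝ) : S → A → ℝ :=
  fun s a => M.R s a + M.γ * ∑ s', M.p s a s' *
    (⨆ μ : stdSimplex ℝ A, (∑ a', μ.1 a' * Q s' a' + η * ν μ.1))

/-- The smoothed Bellman operator `H_η^π` of a policy `pol`. -/
def smoothedPol (M : MDP S A) (ν : (A → ℝ) → ℝ) (η : ℝ) (pol : S → A → ℝ)
    (Q : S → A → ℝ) : S → A → ℝ :=
  fun s a => M.R s a + M.γ * ∑ s', M.p s a s' * (∑ a', pol s' a' * Q s' a' + η * ν (pol s'))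

/-- `ν_max := max_{μ ∈ Δ(A)} ν(μ)`. -/
def nuMax (ν : (A → ℝ) → ℝ) : ℝ := sSup (ν '' stdSimplex ℝ A)

/-- `η_k = τ ∏_{j=1}^k (1 - β_j)`. -/
def eta (τ : ℝ) (β : ℕ → ℝ) (k : ℕ) : ℝ := τ * ∏ j ∈ Finset.Icc 1 k, (1 - β j)

/-- An approximate DSPI sequence: `W k` approximates `Q^{π_k}` within `ε` in sup-norm,
and `Wbar k` is the running average used for the regularized greedy step. -/
structure ApproxDSPISeq (M : MDP S A) (ν : (A → ℝ) → ℝ) (τ : ℝ) (β : ℕ → ℝ) (ε : ℝ) where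
  pol : ℕ → S → A → ℝ
  Qpi : ℕ → S → A → ℝ
  W : ℕ → S → A → ℝ
  Wbar : ℕ → S → A → ℝ
  hpol : ∀ k s, pol k s ∈ stdSimplex ℝ A
  hQpi : ∀ k, bellmanPol M (pol k) (Qpi k) = Qpi k
  hW : ∀ k, supNormQ (W k - Qpi k) ≤ ε
  hpol0 : ∀ s, ∀ μ ∈ stdSimplex ℝ A, ν μ ≤ ν (pol 0 s)
  hWbar0 : Wbar 0 = 0
  hWbarSucc : ∀ k, Wbar (k + 1) = (1 - β k) • Wbar k + β k • W k
  hgreedy : ∀ k, smoothedPol M ν (eta τ β k) (pol (k + 1)) (Wbar (k + 1))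
      = smoothedOpt M ν (eta τ β k) (Wbar (k + 1))

lemma sum_mul_le_sum_mul_add_of_mem_stdSimplex {ι : Type*} [Fintype ι] {w f g : ι → ℝ} {c : ℝ}
    (hw : w ∈ stdSimplex ℝ ι) (h : ∀ i, f i ≤ g i + c) :
    ∑ i, w i * f i ≤ ∑ i, w i * g i + c :=
  calc ∑ i, w i * f i ≤ ∑ i, w i * (g i + c) :=
        sum_le_sum fun i _ => mul_le_mul_of_nonneg_left (h i) (hw.1 i)
    _ = ∑ i, w i * g i + (∑ i, w i) * c := by simp only [mul_add, sum_add_distrib, sum_mul]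
    _ = ∑ i, w i * g i + c := by rw [hw.2, one_mul]

lemma le_iSup_of_isCompact {X : Type*} [TopologicalSpace X] {K : Set X} {f : X → ℝ}
    (hK : IsCompact K) (hf : ContinuousOn f K) {x : X} (hx : x ∈ K) :
    f x ≤ ⨆ y : K, f y := by
  have hbdd : BddAbove (Set.range fun y : K => f y) := by
    rw [← Set.image_eq_range]
    exact hK.bddAbove_image hf
  exact le_ciSup hbdd ⟨x, hx⟩

section

omit [Nonempty S] [Nonempty A]

lemma abs_le_of_supNormQ_le {Q : S → A → ℝ} {ε : ℝ} (h : supNormQ Q ≤ ε) (s : S) (a : A) :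
    |Q s a| ≤ ε :=
  (le_ciSup (Set.finite_range _).bddAbove (s, a)).trans h

def nextValue (M : MDP S A) (ρ : S → A → ℝ) (Q : S → A → ℝ) : S → A → ℝ :=
  fun s a => ∑ s', M.p s a s' * ∑ a', ρ s' a' * Q s' a'

def nextReg (M : MDP S A) (ν : (A → ℝ) → ℝ) (ρ : S → A → ℝ) : S → A → ℝ :=
  fun s a => ∑ s', M.p s a s' * ν (ρ s')

lemma bellmanPol_apply (M : MDP S A) (ρ Q : S → A → ℝ) (s : S) (a : A) :
    bellmanPol M ρ Q s a = M.R s a + M.γ * nextValue M ρ Q s a :=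
  rfl

lemma smoothedPol_apply (M : MDP S A) (ν : (A → ℝ) → ℝ) (η : ℝ) (ρ Q : S → A → ℝ)
    (s : S) (a : A) :
    smoothedPol M ν η ρ Q s a = M.R s a + M.γ * (nextValue M ρ Q s a + η * nextReg M ν ρ s a) := by
  simp only [smoothedPol, nextValue, nextReg, mul_add, sum_add_distrib, mul_sum, mul_left_comm]

lemma nextValue_smul_add_smul (M : MDP S A) (ρ Q W : S → A → ℝ) (c d : ℝ) (s : S) (a : A) :
    nextValue M ρ (c • Q + d • W) s a = c * nextValue M ρ Q s a + d * nextValue M ρ W s a := by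
  simp only [nextValue, Pi.add_apply, Pi.smul_apply, smul_eq_mul, mul_add, sum_add_distrib,
    mul_sum, mul_left_comm]

lemma nextValue_le_add (M : MDP S A) {ρ X Y : S → A → ℝ} {c : ℝ}
    (hρ : ∀ s, ρ s ∈ stdSimplex ℝ A) (h : ∀ s a, X s a ≤ Y s a + c) (s : S) (a : A) :
    nextValue M ρ X s a ≤ nextValue M ρ Y s a + c :=
  sum_mul_le_sum_mul_add_of_mem_stdSimplex (M.hp s a) fun s' =>
    sum_mul_le_sum_mul_add_of_mem_stdSimplex (hρ s') (h s')

lemma smoothedPol_le_smoothedOpt (M : MDP S A) {ν : (A → ℝ) → ℝ}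
    (hν : ContinuousOn ν (stdSimplex ℝ A)) (η : ℝ) {ρ : S → A → ℝ}
    (hρ : ∀ s, ρ s ∈ stdSimplex ℝ A) (Q : S → A → ℝ) (s : S) (a : A) :
    smoothedPol M ν η ρ Q s a ≤ smoothedOpt M ν η Q s a := by
  refine add_le_add le_rfl (mul_le_mul_of_nonneg_left ?_ M.hγ.1.le)
  refine sum_le_sum fun s' _ => mul_le_mul_of_nonneg_left ?_ ((M.hp s a).1 s')
  refine le_iSup_of_isCompact (f := fun μ => ∑ a', μ a' * Q s' a' + η * ν μ)
    (isCompact_stdSimplex ℝ A) ?_ (hρ s')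
  exact (continuous_finsetSum _ fun a' _ => (continuous_apply a').mul continuous_const).continuousOn
    |>.add (continuousOn_const.mul hν)

lemma nextValue_add_le_of_smoothedPol_eq (M : MDP S A) {ν : (A → ℝ) → ℝ}
    (hν : ContinuousOn ν (stdSimplex ℝ A)) {η : ℝ} {π ρ Q : S → A → ℝ}
    (hπ : smoothedPol M ν η π Q = smoothedOpt M ν η Q) (hρ : ∀ s, ρ s ∈ stdSimplex ℝ A)
    (s : S) (a : A) :
    nextValue M ρ Q s a + η * nextReg M ν ρ s a ≤ nextValue M π Q s a + η * nextReg M ν π s a := by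
  have h := smoothedPol_le_smoothedOpt M hν η hρ Q s a
  rw [← hπ, smoothedPol_apply, smoothedPol_apply, add_le_add_iff_left] at h
  exact le_of_mul_le_mul_left h M.hγ.1

lemma le_add_of_isFixedPt_of_nextValue_le (M : MDP S A) {π π' Q Q' W : S → A → ℝ} {ε : ℝ}
    (hπ : ∀ s, π s ∈ stdSimplex ℝ A) (hπ' : ∀ s, π' s ∈ stdSimplex ℝ A)
    (hQ : Function.IsFixedPt (bellmanPol M π) Q) (hQ' : Function.IsFixedPt (bellmanPol M π') Q')
    (hW : ∀ s a, |W s a - Q s a| ≤ ε) (himp : ∀ s a, nextValue M π W s a ≤ nextValue M π' W s a)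
    (s : S) (a : A) :
    Q s a ≤ Q' s a + 2 * M.γ * ε / (1 - M.γ) := by
  have : Nonempty (S × A) := ⟨(s, a)⟩
  obtain ⟨x₀, hx₀⟩ := Finite.exists_max fun x : S × A => Q x.1 x.2 - Q' x.1 x.2
  set m := Q x₀.1 x₀.2 - Q' x₀.1 x₀.2
  have hm : ∀ s a, Q s a ≤ Q' s a + m := fun s a => by linarith [hx₀ (s, a)]
  have hQW : ∀ s a, Q s a ≤ W s a + ε := fun s a => by linarith [(abs_le.1 (hW s a)).1]
  have hWQ : ∀ s a, W s a ≤ Q s a + ε := fun s a => by linarith [(abs_le.1 (hW s a)).2]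
  have hm_le : m ≤ M.γ * (2 * ε + m) := by
    obtain ⟨s₀, a₀⟩ := x₀
    have h₁ := nextValue_le_add M hπ hQW s₀ a₀
    have h₂ := nextValue_le_add M hπ' hWQ s₀ a₀
    have h₃ := nextValue_le_add M hπ' hm s₀ a₀
    have hm_eq : m = M.γ * (nextValue M π Q s₀ a₀ - nextValue M π' Q' s₀ a₀) := by
      have e := congrFun (congrFun hQ s₀) a₀
      have e' := congrFun (congrFun hQ' s₀) a₀
      rw [bellmanPol_apply] at e e'
      linear_combination e' - e
    rw [hm_eq]
    exact mul_le_mul_of_nonneg_left (by linarith [himp s₀ a₀]) M.hγ.1.le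
  have hm_bound : m ≤ 2 * M.γ * ε / (1 - M.γ) := by
    rw [le_div_iff₀ (sub_pos.2 M.hγ.2)]
    linarith
  linarith [hm s a]

lemma eta_zero (τ : ℝ) (β : ℕ → ℝ) : eta τ β 0 = τ := by
  simp [eta]

lemma eta_succ (τ : ℝ) (β : ℕ → ℝ) (k : ℕ) : eta τ β (k + 1) = (1 - β (k + 1)) * eta τ β k := by
  rw [eta, eta, prod_Icc_succ_top (Nat.le_add_left 1 k)]
  ring

namespace ApproxDSPISeq

variable {M : MDP S A} {ν : (A → ℝ) → ℝ} {τ : ℝ} {β : ℕ → ℝ} {ε : ℝ}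

lemma abs_W_sub_Qpi_le (D : ApproxDSPISeq M ν τ β ε) (k : ℕ) (s : S) (a : A) :
    |D.W k s a - D.Qpi k s a| ≤ ε :=
  abs_le_of_supNormQ_le (D.hW k) s a

lemma Wbar_succ_apply (D : ApproxDSPISeq M ν τ β ε) (k : ℕ) (s : S) (a : A) :
    D.Wbar (k + 1) s a = (1 - β k) * D.Wbar k s a + β k * D.W k s a := by
  simp [D.hWbarSucc k]

lemma Wbar_one (D : ApproxDSPISeq M ν τ β ε) (hβ0 : β 0 = 1) : D.Wbar 1 = D.W 0 := by
  simp [D.hWbarSucc 0, D.hWbar0, hβ0]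

lemma nextValue_W_le (D : ApproxDSPISeq M ν τ β ε) (hν : ContinuousOn ν (stdSimplex ℝ A))
    (hτ : 0 ≤ τ) (hβ0 : β 0 = 1) (hβ : ∀ k ≥ 1, β k ∈ Set.Ioc 0 1) (k : ℕ) (s : S) (a : A) :
    nextValue M (D.pol k) (D.W k) s a ≤ nextValue M (D.pol (k + 1)) (D.W k) s a := by
  have greedy := fun k ρ hρ =>
    nextValue_add_le_of_smoothedPol_eq M hν (D.hgreedy k) (ρ := ρ) hρ s a
  cases k with
  | zero =>
    have h := greedy 0 (D.pol 0) (D.hpol 0)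
    rw [D.Wbar_one hβ0, eta_zero] at h
    have hreg : nextReg M ν (D.pol 1) s a ≤ nextReg M ν (D.pol 0) s a :=
      sum_le_sum fun s' _ => mul_le_mul_of_nonneg_left
        (D.hpol0 s' _ (D.hpol 1 s')) ((M.hp s a).1 s')
    linarith [mul_le_mul_of_nonneg_left hreg hτ]
  | succ m =>
    obtain ⟨hb₀, hb₁⟩ := hβ (m + 1) (Nat.le_add_left 1 m)
    have hA := greedy (m + 1) (D.pol (m + 1)) (D.hpol (m + 1))
    have hB := greedy m (D.pol (m + 2)) (D.hpol (m + 2))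
    rw [D.hWbarSucc (m + 1), eta_succ, nextValue_smul_add_smul, nextValue_smul_add_smul] at hA
    have hB' := mul_le_mul_of_nonneg_left hB (sub_nonneg.2 hb₁)
    have hb : β (m + 1) * nextValue M (D.pol (m + 1)) (D.W (m + 1)) s a
        ≤ β (m + 1) * nextValue M (D.pol (m + 2)) (D.W (m + 1)) s a := by
      linarith
    exact le_of_mul_le_mul_left hb hb₀

lemma Qpi_le_Qpi_succ_add (D : ApproxDSPISeq M ν τ β ε) (hν : ContinuousOn ν (stdSimplex ℝ A))
    (hτ : 0 ≤ τ) (hβ0 : β 0 = 1) (hβ : ∀ k ≥ 1, β k ∈ Set.Ioc 0 1) (k : ℕ) (s : S) (a : A) :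
    D.Qpi k s a ≤ D.Qpi (k + 1) s a + 2 * M.γ * ε / (1 - M.γ) :=
  le_add_of_isFixedPt_of_nextValue_le M (D.hpol k) (D.hpol (k + 1)) (D.hQpi k) (D.hQpi (k + 1))
    (D.abs_W_sub_Qpi_le k) (D.nextValue_W_le hν hτ hβ0 hβ k) s a

end ApproxDSPISeq

end

theorem approx_dspi_Wbar_bound_general
    (M : MDP S A)
    (ν : (A → ℝ) → ℝ)
    (hν_cont : ContinuousOn ν (stdSimplex ℝ A))
    (τ : ℝ) (hτ : 0 ≤ τ)
    (ε : ℝ) (hε : 0 ≤ ε)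
    (b : ℝ) (hb : b ∈ Set.Ioc (0 : ℝ) 1)
    (β : ℕ → ℝ) (hβ0 : β 0 = 1) (hβ : ∀ k ≥ 1, β k = b)
    (D : ApproxDSPISeq M ν τ β ε) :
    ∀ k ≥ 1, ∀ s a,
      D.Wbar k s a
        ≤ D.Qpi k s a
          + ((1 + M.γ) / (1 - M.γ)) * ε * ∑ i ∈ Finset.range k, (1 - b) ^ i := by
  have hstep : (1 + M.γ) / (1 - M.γ) * ε = ε + 2 * M.γ * ε / (1 - M.γ) := by
    field_simp [(sub_pos.2 M.hγ.2).ne']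
    ring
  have himp := D.Qpi_le_Qpi_succ_add hν_cont hτ hβ0 fun k hk => hβ k hk ▸ hb
  intro k hk
  induction k, hk using Nat.le_induction with
  | base =>
    intro s a
    rw [D.Wbar_one hβ0, sum_range_one, pow_zero, mul_one, hstep]
    linarith [(abs_le.1 (D.abs_W_sub_Qpi_le 0 s a)).2, himp 0 s a]
  | succ n hn ih =>
    intro s a
    rw [D.Wbar_succ_apply, hβ n hn, geom_sum_succ]
    have hW := (abs_le.1 (D.abs_W_sub_Qpi_le n s a)).2
    linarith [mul_le_mul_of_nonneg_left (ih s a) (sub_nonneg.2 hb.2),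
      mul_le_mul_of_nonneg_left hW hb.1.le, mul_le_of_le_one_left hε hb.2, himp n s a]

/-- **Bound on the averaged iterates in approximate DSPI** (Corollary 3). -/
theorem approx_dspi_Wbar_bound
    (M : MDP S A)
    (ν : (A → ℝ) → ℝ)
    (hν_cont : ContinuousOn ν (stdSimplex ℝ A))
    (hν_nonneg : ∀ μ ∈ stdSimplex ℝ A, 0 ≤ ν μ)
    (hν_conc : ConcaveOn ℝ (stdSimplex ℝ A) ν)
    (τ : ℝ) (hτ : 0 ≤ τ)
    (ε : ℝ) (hε : 0 ≤ ε)
    (b : ℝ) (hb : b ∈ Set.Ioc (0 : ℝ) 1)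
    (β : ℕ → ℝ) (hβ0 : β 0 = 1) (hβ : ∀ k ≥ 1, β k = b)
    (D : ApproxDSPISeq M ν τ β ε) :
    ∀ k ≥ 1, ∀ s a,
      D.Wbar k s a
        ≤ D.Qpi k s a
          + ((1 + M.γ) / (1 - M.γ)) * ε * ∑ i ∈ Finset.range k, (1 - b) ^ i :=
  approx_dspi_Wbar_bound_general M ν hν_cont τ hτ ε hε b hb β hβ0 hβ D
end
end
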